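/- Fix b > 0 and z ∈ ℍ, and let {μ_s} be a measurable family of probability measures on ℝ. The Picard iteration B₀(a) ≡ z, B_{n+1}(a) = z − ∫_a^b (∫_ℝ 1/(B_n(s)−x) dμ_s(x)) ds satisfies Im(B_n(a)) ≥ Im(z) for all n and a ∈ [0,b], and |B_{n+1}(a) − B_n(a)| ≤ (b−a)^{n+1} / (Im(z)^{2n+1} · (n+1)!) for all n ≥ 0. -/

import Mathlib

open MeasureTheory Complex Set

/-!
The Cauchy transform `G_μ(w) = ∫ (w - x)⁻¹ dμ(x)` of a probability measure maps `ℍ` into the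
closed lower half-plane and, on `{Im w ≥ ε}`, is bounded by `ε⁻¹` and `ε⁻²`-Lipschitz. The first
fact shows that the Picard map `f ↦ z - ∫_a^b G_{μ_s}(f s) ds` never pushes the imaginary part
below `Im z`, so every iterate stays in `{Im w ≥ Im z}`; the Lipschitz bound then turns an estimate
`C (b - s)^k` for the difference of two inputs into `C (b - a)^(k+1) / ((k+1) Im(z)^2)` for the
outputs, which iterates to the factorial bound exactly as in the Picard–Lindelöf theorem.
The iterates are continuous in `a`, being indefinite integrals of bounded functions; together with
the joint measurability of `(w, s) ↦ G_{μ_s}(w)` this makes every integrand measurable.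
-/

noncomputable def cauchyTransform (μ : Measure ℝ) (w : ℂ) : ℂ :=
  ∫ x : ℝ, (w - (x : ℂ))⁻¹ ∂μ

section CauchyKernel

variable {w w' : ℂ} {ε : ℝ}

lemma im_le_norm_sub_ofReal (w : ℂ) (x : ℝ) : w.im ≤ ‖w - x‖ := by
  simpa using (le_abs_self _).trans (abs_im_le_norm (w - x))

lemma sub_ofReal_ne_zero (hw : 0 < w.im) (x : ℝ) : w - x ≠ 0 :=
  norm_pos_iff.mp (hw.trans_le (im_le_norm_sub_ofReal w x))

lemma norm_inv_sub_ofReal_le (hε : 0 < ε) (hw : ε ≤ w.im) (x : ℝ) : ‖(w - x)⁻¹‖ ≤ ε⁻¹ := by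
  rw [norm_inv]
  exact inv_anti₀ hε (hw.trans (im_le_norm_sub_ofReal w x))

lemma norm_inv_sub_ofReal_sub_inv_le (hε : 0 < ε) (hw : ε ≤ w.im) (hw' : ε ≤ w'.im) (x : ℝ) :
    ‖(w - x)⁻¹ - (w' - x)⁻¹‖ ≤ ‖w - w'‖ / ε ^ 2 := by
  have hne := sub_ofReal_ne_zero (hε.trans_le hw) x
  have hne' := sub_ofReal_ne_zero (hε.trans_le hw') x
  have hresolvent : (w - x)⁻¹ - (w' - x)⁻¹ = (w' - w) * ((w - x)⁻¹ * (w' - x)⁻¹) := by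
    field_simp
    ring
  rw [hresolvent, norm_mul, norm_mul, norm_sub_rev, div_eq_mul_inv, sq, mul_inv]
  gcongr
  · exact norm_inv_sub_ofReal_le hε hw x
  · exact norm_inv_sub_ofReal_le hε hw' x

lemma integrable_inv_sub_ofReal (μ : Measure ℝ) [IsFiniteMeasure μ] (hw : 0 < w.im) :
    Integrable (fun x : ℝ => (w - x)⁻¹) μ := by
  have hcont : Continuous fun x : ℝ => (w - x)⁻¹ :=
    (continuous_const.sub continuous_ofReal).inv₀ (sub_ofReal_ne_zero hw)
  exact (integrable_const w.im⁻¹).mono' hcont.aestronglyMeasurable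
    (ae_of_all _ (norm_inv_sub_ofReal_le hw le_rfl))

end CauchyKernel

lemma im_integral_nonpos {α : Type*} [MeasurableSpace α] {ν : Measure α} {F : α → ℂ}
    (hF : ∀ᵐ t ∂ν, (F t).im ≤ 0) : (∫ t, F t ∂ν).im ≤ 0 := by
  by_cases hint : Integrable F ν
  · calc (∫ t, F t ∂ν).im = ∫ t, (F t).im ∂ν := (integral_im hint).symm
      _ ≤ 0 := integral_nonpos_of_ae hF
  · simp [integral_undef hint]

section CauchyTransform

variable (μ : Measure ℝ) {w w' : ℂ} {ε : ℝ}

lemma im_cauchyTransform_nonpos (hw : 0 < w.im) : (cauchyTransform μ w).im ≤ 0 :=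
  im_integral_nonpos <| ae_of_all _ fun x => by
    rw [inv_im]
    exact div_nonpos_of_nonpos_of_nonneg (by simpa using hw.le) (normSq_nonneg _)

variable [IsProbabilityMeasure μ]

lemma norm_cauchyTransform_le (hε : 0 < ε) (hw : ε ≤ w.im) : ‖cauchyTransform μ w‖ ≤ ε⁻¹ := by
  rw [cauchyTransform]
  simpa using norm_integral_le_of_norm_le_const (μ := μ) (ae_of_all _ (norm_inv_sub_ofReal_le hε hw))

lemma norm_cauchyTransform_sub_le (hε : 0 < ε) (hw : ε ≤ w.im) (hw' : ε ≤ w'.im) :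
    ‖cauchyTransform μ w - cauchyTransform μ w'‖ ≤ ‖w - w'‖ / ε ^ 2 := by
  rw [cauchyTransform, cauchyTransform, ← integral_sub (integrable_inv_sub_ofReal μ (hε.trans_le hw))
    (integrable_inv_sub_ofReal μ (hε.trans_le hw'))]
  simpa using norm_integral_le_of_norm_le_const (μ := μ)
    (ae_of_all _ (norm_inv_sub_ofReal_sub_inv_le hε hw hw'))

lemma continuousOn_cauchyTransform (hε : 0 < ε) :
    ContinuousOn (cauchyTransform μ) {w | ε ≤ w.im} :=
  (LipschitzOnWith.of_dist_le' (K := (ε ^ 2)⁻¹) fun w hw w' hw' => by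
    simpa [dist_eq_norm, div_eq_inv_mul] using norm_cauchyTransform_sub_le μ hε hw hw').continuousOn

end CauchyTransform

section Measurability

variable {α : Type*} [MeasurableSpace α] {μ : α → Measure ℝ} [∀ s, IsProbabilityMeasure (μ s)]
  {ν : Measure α} {f : α → ℂ} {ε : ℝ}

/-- The projection `proj` onto `{Im w ≥ ε}` makes the integrand continuous in `w` on all of `ℂ`,
as joint measurability requires. -/
lemma aestronglyMeasurable_cauchyTransform_comp
    (hmeas : ∀ w : ℂ, 0 < w.im → Measurable fun s => cauchyTransform (μ s) w) (hε : 0 < ε)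
    (hf : AEMeasurable f ν) (hfε : ∀ᵐ s ∂ν, ε ≤ (f s).im) :
    AEStronglyMeasurable (fun s => cauchyTransform (μ s) (f s)) ν := by
  let proj : ℂ → ℂ := fun w => w.re + (max w.im ε : ℝ) * I
  have hproj_im (w : ℂ) : (proj w).im = max w.im ε := by simp [proj]
  have hproj_mem (w : ℂ) : ε ≤ (proj w).im := by simp [hproj_im]
  have hjoint : Measurable (Function.uncurry fun w s => cauchyTransform (μ s) (proj w)) :=
    measurable_uncurry_of_continuous_of_measurable
      (fun s => (continuousOn_cauchyTransform (μ s) hε).comp_continuous (by fun_prop) hproj_mem)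
      (fun w => hmeas _ (hε.trans_le (hproj_mem w)))
  refine (hjoint.comp_aemeasurable (hf.prodMk aemeasurable_id)).aestronglyMeasurable.congr ?_
  filter_upwards [hfε] with s hs
  have hfix : proj (f s) = f s := Complex.ext (by simp [proj]) (by simp [hproj_im, hs])
  simp [hfix]

lemma integrable_cauchyTransform_comp [IsFiniteMeasure ν]
    (hmeas : ∀ w : ℂ, 0 < w.im → Measurable fun s => cauchyTransform (μ s) w) (hε : 0 < ε)
    (hf : AEMeasurable f ν) (hfε : ∀ᵐ s ∂ν, ε ≤ (f s).im) :
    Integrable (fun s => cauchyTransform (μ s) (f s)) ν :=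
  (integrable_const ε⁻¹).mono' (aestronglyMeasurable_cauchyTransform_comp hmeas hε hf hfε)
    (hfε.mono fun s hs => norm_cauchyTransform_le (μ s) hε hs)

end Measurability

lemma integral_Ioc_sub_pow {a b : ℝ} (hab : a ≤ b) (k : ℕ) :
    ∫ s in Ioc a b, (b - s) ^ k = (b - a) ^ (k + 1) / (k + 1) := by
  rw [← intervalIntegral.integral_of_le hab,
    intervalIntegral.integral_comp_sub_left (fun x : ℝ => x ^ k), sub_self, integral_pow]
  simp

noncomputable def picardStep (μ : ℝ → Measure ℝ) (z : ℂ) (b : ℝ) (f : ℝ → ℂ) (a : ℝ) : ℂ :=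
  z - ∫ s in Ioc a b, cauchyTransform (μ s) (f s)

section PicardStep

variable {μ : ℝ → Measure ℝ} {z : ℂ} {a b : ℝ} {f g : ℝ → ℂ}

lemma im_le_im_picardStep (hf : ∀ s ∈ Ioc a b, 0 < (f s).im) :
    z.im ≤ (picardStep μ z b f a).im := by
  have hint_im : (∫ s in Ioc a b, cauchyTransform (μ s) (f s)).im ≤ 0 :=
    im_integral_nonpos <| (ae_restrict_iff' measurableSet_Ioc).2 <| ae_of_all _ fun s hs =>
      im_cauchyTransform_nonpos (μ s) (hf s hs)
  rw [picardStep, sub_im]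
  linarith

variable [∀ s, IsProbabilityMeasure (μ s)]

lemma norm_picardStep_sub_le (hz : 0 < z.im) (hab : a ≤ b)
    (hfz : ∀ s ∈ Ioc a b, z.im ≤ (f s).im) : ‖picardStep μ z b f a - z‖ ≤ (b - a) / z.im := by
  rw [picardStep, sub_sub_cancel_left, norm_neg, div_eq_inv_mul,
    ← Real.volume_real_Ioc_of_le hab]
  exact norm_setIntegral_le_of_norm_le_const measure_Ioc_lt_top fun s hs =>
    norm_cauchyTransform_le (μ s) hz (hfz s hs)

lemma integrableOn_cauchyTransform_comp
    (hmeas : ∀ w : ℂ, 0 < w.im → Measurable fun s => cauchyTransform (μ s) w)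
    (hz : 0 < z.im) (hf : ContinuousOn f (Icc 0 b))
    (hfz : ∀ s ∈ Icc 0 b, z.im ≤ (f s).im) :
    IntegrableOn (fun s => cauchyTransform (μ s) (f s)) (Icc 0 b) :=
  integrable_cauchyTransform_comp hmeas hz (hf.aemeasurable measurableSet_Icc)
    ((ae_restrict_iff' measurableSet_Icc).2 (ae_of_all _ hfz))

lemma continuousOn_picardStep (hmeas : ∀ w : ℂ, 0 < w.im → Measurable fun s => cauchyTransform (μ s) w)
    (hb : 0 ≤ b) (hz : 0 < z.im) (hf : ContinuousOn f (Icc 0 b))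
    (hfz : ∀ s ∈ Icc 0 b, z.im ≤ (f s).im) : ContinuousOn (picardStep μ z b f) (Icc 0 b) := by
  have hint := integrableOn_cauchyTransform_comp hmeas hz hf hfz
  rw [← uIcc_of_le hb] at hint
  have hprim := intervalIntegral.continuousOn_primitive_interval_left hint
  rw [uIcc_of_le hb] at hprim
  refine ((continuousOn_const (c := z)).sub hprim).congr fun a ha => ?_
  simp only [picardStep, Pi.sub_apply, intervalIntegral.integral_of_le ha.2]

lemma norm_picardStep_sub_picardStep_le
    (hmeas : ∀ w : ℂ, 0 < w.im → Measurable fun s => cauchyTransform (μ s) w)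
    (hz : 0 < z.im) (hf : ContinuousOn f (Icc 0 b))
    (hfz : ∀ s ∈ Icc 0 b, z.im ≤ (f s).im) (hg : ContinuousOn g (Icc 0 b))
    (hgz : ∀ s ∈ Icc 0 b, z.im ≤ (g s).im) (ha : a ∈ Icc 0 b) {C : ℝ} {k : ℕ}
    (hfg : ∀ s ∈ Ioc a b, ‖f s - g s‖ ≤ C * (b - s) ^ k) :
    ‖picardStep μ z b f a - picardStep μ z b g a‖ ≤
      C / z.im ^ 2 * ((b - a) ^ (k + 1) / (k + 1)) := by
  have hsub : Ioc a b ⊆ Icc 0 b := Ioc_subset_Icc_self.trans (Icc_subset_Icc_left ha.1)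
  have hF := (integrableOn_cauchyTransform_comp hmeas hz hf hfz).mono_set hsub
  have hG := (integrableOn_cauchyTransform_comp hmeas hz hg hgz).mono_set hsub
  calc ‖picardStep μ z b f a - picardStep μ z b g a‖
      = ‖∫ s in Ioc a b, (cauchyTransform (μ s) (g s) - cauchyTransform (μ s) (f s))‖ := by
        rw [picardStep, picardStep, integral_sub hG hF, sub_sub_sub_cancel_left]
    _ ≤ ∫ s in Ioc a b, C / z.im ^ 2 * (b - s) ^ k := by
        refine norm_integral_le_of_norm_le (Continuous.integrableOn_Ioc (by fun_prop)) ?_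
        refine (ae_restrict_iff' measurableSet_Ioc).2 (ae_of_all _ fun s hs => ?_)
        have hs' := hsub hs
        calc _ ≤ ‖g s - f s‖ / z.im ^ 2 := norm_cauchyTransform_sub_le (μ s) hz (hgz s hs') (hfz s hs')
          _ ≤ C * (b - s) ^ k / z.im ^ 2 := by rw [norm_sub_rev]; gcongr; exact hfg s hs
          _ = C / z.im ^ 2 * (b - s) ^ k := by ring
    _ = C / z.im ^ 2 * ((b - a) ^ (k + 1) / (k + 1)) := by
        rw [integral_const_mul, integral_Ioc_sub_pow ha.2]

end PicardStep

/-- Picard iteration for the backward chordal Loewner equation: with `B₀(a) ≡ z` and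
`B_{n+1}(a) = z - ∫_a^b ∫ 1/(B_n(s)-x) dμ_s(x) ds`, one has `Im(B_n(a)) ≥ Im z`
and `|B_{n+1}(a) - B_n(a)| ≤ (b-a)^{n+1}/(Im(z)^{2n+1}·(n+1)!)` on `[0,b]`. -/
theorem loewner_picard_iteration (b : ℝ) (hb : 0 < b) (z : ℂ) (hz : 0 < z.im)
    (μ : ℝ → Measure ℝ) [∀ s, IsProbabilityMeasure (μ s)]
    (hmeas : ∀ w : ℂ, 0 < w.im → Measurable fun s : ℝ => ∫ x : ℝ, (w - (x : ℂ))⁻¹ ∂(μ s))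
    (B : ℕ → ℝ → ℂ)
    (hB0 : ∀ a : ℝ, B 0 a = z)
    (hBrec : ∀ n : ℕ, ∀ a ∈ Set.Icc (0 : ℝ) b,
      B (n + 1) a = z - ∫ s in Set.Ioc a b, (∫ x : ℝ, (B n s - (x : ℂ))⁻¹ ∂(μ s))) :
    (∀ n : ℕ, ∀ a ∈ Set.Icc (0 : ℝ) b, z.im ≤ (B n a).im) ∧
    (∀ n : ℕ, ∀ a ∈ Set.Icc (0 : ℝ) b,
      ‖B (n + 1) a - B n a‖ ≤
        (b - a) ^ (n + 1) / (z.im ^ (2 * n + 1) * ((n + 1).factorial : ℝ))) := by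
  have hstep : ∀ n, ∀ a ∈ Icc 0 b, B (n + 1) a = picardStep μ z b (B n) a := hBrec
  have hsub : ∀ a ∈ Icc 0 b, Ioc a b ⊆ Icc 0 b := fun a ha =>
    Ioc_subset_Icc_self.trans (Icc_subset_Icc_left ha.1)
  have hiter : ∀ n, ContinuousOn (B n) (Icc 0 b) ∧ ∀ a ∈ Icc 0 b, z.im ≤ (B n a).im := by
    intro n
    induction n with
    | zero => exact ⟨continuousOn_const.congr fun a _ => hB0 a, fun a _ => by rw [hB0]⟩
    | succ n ih =>
      refine ⟨(continuousOn_picardStep hmeas hb.le hz ih.1 ih.2).congr (hstep n), fun a ha => ?_⟩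
      rw [hstep n a ha]
      exact im_le_im_picardStep fun s hs => hz.trans_le (ih.2 s (hsub a ha hs))
  refine ⟨fun n => (hiter n).2, fun n => ?_⟩
  induction n with
  | zero =>
    intro a ha
    rw [hstep 0 a ha, hB0]
    simpa using norm_picardStep_sub_le hz ha.2 fun s hs => (hiter 0).2 s (hsub a ha hs)
  | succ n ih =>
    intro a ha
    rw [hstep (n + 1) a ha, hstep n a ha]
    refine (norm_picardStep_sub_picardStep_le hmeas hz (hiter _).1 (hiter _).2 (hiter _).1
      (hiter _).2 ha fun s hs => (ih s (hsub a ha hs)).trans_eq (div_eq_inv_mul _ _)).trans_eq ?_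
    rw [Nat.factorial_succ (n + 1)]
    push_cast
    field_simp
    ring
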